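/- arXiv:0712.3962 — 2 statements merged into one kernel-verified Lean document; each statement's English description precedes it below -/
import Mathlib

section
/- In U(b)[[ξ]] with [h, e] = e, the identity Σ_{k≥0} ((−ξ)^k/k!) h(h−1)⋯(h−k+1) e^k = exp(−ξ h e) holds as formal power series in ξ. -/
/-! The relation `[h, e] = e` says `e h = (h - 1) e`, so moving `h` to the left past `e ^ k`
shifts it to `h - k`. Sorting the `h`'s in `(h e) ^ k` to the left therefore produces
`h (h - 1) ⋯ (h - k + 1) e ^ k`, and the series on the left is `∑ (-ξ h e) ^ k / k!`. -/

noncomputable def expPS {A : Type*} [Ring A] [Algebra ℚ A] (X : PowerSeries A) :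
    PowerSeries A :=
  PowerSeries.mk fun m =>
    ∑ n ∈ Finset.range (m + 1), ((n.factorial : ℚ)⁻¹) • (PowerSeries.coeff m) (X ^ n)

noncomputable def fallFac {A : Type*} [Ring A] (a : A) (k : ℕ) : A :=
  ((List.range k).map (fun j : ℕ => a - (j : A))).prod

open PowerSeries

section FallingFactorial

variable {A : Type*} [Ring A]

theorem fallFac_succ (a : A) (k : ℕ) : fallFac a (k + 1) = fallFac a k * (a - k) := by
  simp [fallFac, List.range_succ]

theorem pow_mul_of_mul_sub_mul_eq_self {h e : A} (hhe : h * e - e * h = e) (k : ℕ) :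
    e ^ k * h = (h - k) * e ^ k := by
  induction k with
  | zero => simp
  | succ k ih =>
    have he : e * h = h * e - e := by rw [sub_eq_iff_eq_add] at hhe; rw [hhe]; abel
    calc e ^ (k + 1) * h = e ^ k * (h * e - e) := by rw [pow_succ, mul_assoc, he]
      _ = (h - (k + 1 : ℕ)) * e ^ (k + 1) := by
        rw [mul_sub, ← mul_assoc, ih]; push_cast [pow_succ]; noncomm_ring

theorem fallFac_mul_pow_of_mul_sub_mul_eq_self {h e : A} (hhe : h * e - e * h = e) (k : ℕ) :
    fallFac h k * e ^ k = (h * e) ^ k := by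
  induction k with
  | zero => simp [fallFac]
  | succ k ih =>
    calc fallFac h (k + 1) * e ^ (k + 1) = fallFac h k * ((h - k) * e ^ k) * e := by
          rw [fallFac_succ, pow_succ]; noncomm_ring
      _ = (h * e) ^ (k + 1) := by
          rw [← pow_mul_of_mul_sub_mul_eq_self hhe, pow_succ, ← ih]; noncomm_ring

end FallingFactorial

theorem PowerSeries.coeff_monomial_one_pow {R : Type*} [Semiring R] (a : R) (m n : ℕ) :
    coeff m (monomial 1 a ^ n) = if m = n then a ^ n else 0 := by
  rw [monomial_eq_C_mul_X_pow, pow_one, (commute_X (C a)).mul_pow, ← map_pow,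
    coeff_C_mul_X_pow]

theorem coeff_expPS_monomial_one {A : Type*} [Ring A] [Algebra ℚ A] (a : A) (m : ℕ) :
    coeff m (expPS (monomial 1 a)) = (m.factorial : ℚ)⁻¹ • a ^ m := by
  rw [expPS, coeff_mk, Finset.sum_eq_single_of_mem m (Finset.self_mem_range_succ m)]
  · rw [coeff_monomial_one_pow, if_pos rfl]
  · intro n _ hnm
    rw [coeff_monomial_one_pow, if_neg (Ne.symm hnm), smul_zero]

/-- in `U(b)[[ξ]]` with `[h,e] = e`,
`Σ_k ((−ξ)^k/k!) h(h−1)⋯(h−k+1) e^k = exp(−ξ h e)`. -/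
theorem fallFac_series_eq_exp {A : Type*} [Ring A] [Algebra ℚ A]
    (h e : A) (hhe : h * e - e * h = e) :
    (PowerSeries.mk fun k =>
        (((-1 : ℚ) ^ k) * (k.factorial : ℚ)⁻¹) • (fallFac h k * e ^ k)) =
      expPS (PowerSeries.mk fun m => if m = 1 then -(h * e) else 0) := by
  ext k
  rw [← monomial_eq_mk, coeff_expPS_monomial_one, coeff_mk,
    fallFac_mul_pow_of_mul_sub_mul_eq_self hhe, neg_pow (h * e), mul_comm, mul_smul,
    Algebra.smul_def ((-1 : ℚ) ^ k), map_pow, map_neg, map_one]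
end

section
/- In the Poincaré algebra P(3,1), the elements h' = iM₃ and P₀ commute, [h', P₀] = 0, and hence the two-tensor r₁₃ = β₁ P₀ ∧ h' + α₁ P₀ ∧ P₃ + α₂ P₁ ∧ P₂ satisfies the homogeneous classical Yang–Baxter equation, using also [h', P₃] = 0, [h', P₁] = iP₂·i = −P₂-type relations ([M₃, P₁] = iP₂, [M₃, P₂] = −iP₁) and the mutual commutativity of the momenta. -/
/-!
Write `r = P₀ ∧ b + α₂ P₁ ∧ P₂` with `b = β₁ h' + α₁ P₃`. The Yang–Baxter expression is quadratic
in `r`. Each diagonal term vanishes because the two factors of each wedge commute. The cross terms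
cancel because `P₀` commutes with `b`, `P₁` and `P₂`, and `ad b` acts on the plane of `P₁, P₂` as an
infinitesimal rotation (`[b, P₁] = -β₁ P₂`, `[b, P₂] = β₁ P₁`), so it kills `P₁ ∧ P₂`.
-/

open scoped TensorProduct

/-- The Levi-Civita symbol on three indices. -/
def eps : Fin 3 → Fin 3 → Fin 3 → ℤ
  | 0, 1, 2 => 1
  | 1, 2, 0 => 1
  | 2, 0, 1 => 1
  | 1, 0, 2 => -1
  | 0, 2, 1 => -1
  | 2, 1, 0 => -1
  | _, _, _ => 0

section YangBaxter

open TensorProduct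

attribute [local instance] LieRing.ofAssociativeRing

variable {R A : Type*} [CommRing R] [Ring A] [Algebra R A]

variable (R) in
def wedge (x y : A) : A ⊗[R] A := x ⊗ₜ[R] y - y ⊗ₜ[R] x

variable (R A) in
/-- The polarization of the classical Yang–Baxter expression:
`cybeForm R A r r = ⁅r¹², r¹³⁆ + ⁅r¹², r²³⁆ + ⁅r¹³, r²³⁆`. -/
def cybeForm : A ⊗[R] A →ₗ[R] A ⊗[R] A →ₗ[R] A ⊗[R] (A ⊗[R] A) :=
  let E12 : (A ⊗[R] A) →ₐ[R] A ⊗[R] (A ⊗[R] A) :=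
    Algebra.TensorProduct.map (AlgHom.id R A) Algebra.TensorProduct.includeLeft
  let E13 : (A ⊗[R] A) →ₐ[R] A ⊗[R] (A ⊗[R] A) :=
    Algebra.TensorProduct.map (AlgHom.id R A) Algebra.TensorProduct.includeRight
  let E23 : (A ⊗[R] A) →ₐ[R] A ⊗[R] (A ⊗[R] A) := Algebra.TensorProduct.includeRight
  LinearMap.mk₂ R (fun r s => ⁅E12 r, E13 s⁆ + ⁅E12 r, E23 s⁆ + ⁅E13 r, E23 s⁆)
    (fun _ _ _ => by simp only [map_add, add_lie]; abel)
    (fun _ _ _ => by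
      simp only [map_smul, Ring.lie_def, smul_mul_assoc, mul_smul_comm, smul_sub, smul_add])
    (fun _ _ _ => by simp only [map_add, lie_add]; abel)
    (fun _ _ _ => by
      simp only [map_smul, Ring.lie_def, smul_mul_assoc, mul_smul_comm, smul_sub, smul_add])

theorem cybeForm_tmul_tmul (x y u v : A) :
    cybeForm R A (x ⊗ₜ y) (u ⊗ₜ v) =
      ⁅x, u⁆ ⊗ₜ (y ⊗ₜ v) + x ⊗ₜ (⁅y, u⁆ ⊗ₜ v) + x ⊗ₜ (u ⊗ₜ ⁅y, v⁆) := by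
  simp [cybeForm, Ring.lie_def, Algebra.TensorProduct.tmul_mul_tmul, sub_tmul, tmul_sub]

theorem cybeForm_wedge_wedge_eq_zero {x y : A} (h : ⁅x, y⁆ = 0) :
    cybeForm R A (wedge R x y) (wedge R x y) = 0 := by
  have h' : ⁅y, x⁆ = 0 := by rw [← lie_skew, h, neg_zero]
  simp [wedge, cybeForm_tmul_tmul, h, h']

theorem cybeForm_wedge_wedge_add_swap_eq_zero {a b c d : A} (k : R)
    (hac : ⁅a, c⁆ = 0) (had : ⁅a, d⁆ = 0) (hbc : ⁅b, c⁆ = -(k • d)) (hbd : ⁅b, d⁆ = k • c) :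
    cybeForm R A (wedge R a b) (wedge R c d) + cybeForm R A (wedge R c d) (wedge R a b) = 0 := by
  have hca : ⁅c, a⁆ = 0 := by rw [← lie_skew, hac, neg_zero]
  have hda : ⁅d, a⁆ = 0 := by rw [← lie_skew, had, neg_zero]
  have hcb : ⁅c, b⁆ = k • d := by rw [← lie_skew, hbc, neg_neg]
  have hdb : ⁅d, b⁆ = -(k • c) := by rw [← lie_skew, hbd]
  simp only [wedge, map_sub, LinearMap.sub_apply, cybeForm_tmul_tmul, hac, had, hca, hda, hbc,
    hbd, hcb, hdb, zero_tmul, tmul_zero, neg_tmul, tmul_neg, ← smul_tmul', tmul_smul]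
  module

theorem cybeForm_wedge_add_smul_wedge_eq_zero {a b c d : A} (k t : R)
    (hab : ⁅a, b⁆ = 0) (hac : ⁅a, c⁆ = 0) (had : ⁅a, d⁆ = 0) (hcd : ⁅c, d⁆ = 0)
    (hbc : ⁅b, c⁆ = -(k • d)) (hbd : ⁅b, d⁆ = k • c) :
    cybeForm R A (wedge R a b + t • wedge R c d) (wedge R a b + t • wedge R c d) = 0 := by
  have hcross := cybeForm_wedge_wedge_add_swap_eq_zero k hac had hbc hbd
  simp only [map_add, map_smul, LinearMap.add_apply, LinearMap.smul_apply,
    cybeForm_wedge_wedge_eq_zero hab, cybeForm_wedge_wedge_eq_zero hcd]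
  rw [eq_neg_of_add_eq_zero_right hcross]
  module

theorem cybeForm_ι_wedge_add_smul_wedge_eq_zero {L : Type*} [LieRing L] [LieAlgebra R L]
    {a b c d : L} (k t : R) (hab : ⁅a, b⁆ = 0) (hac : ⁅a, c⁆ = 0) (had : ⁅a, d⁆ = 0)
    (hcd : ⁅c, d⁆ = 0) (hbc : ⁅b, c⁆ = -(k • d)) (hbd : ⁅b, d⁆ = k • c) :
    cybeForm R (UniversalEnvelopingAlgebra R L)
      (wedge R (UniversalEnvelopingAlgebra.ι R a) (UniversalEnvelopingAlgebra.ι R b) +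
        t • wedge R (UniversalEnvelopingAlgebra.ι R c) (UniversalEnvelopingAlgebra.ι R d))
      (wedge R (UniversalEnvelopingAlgebra.ι R a) (UniversalEnvelopingAlgebra.ι R b) +
        t • wedge R (UniversalEnvelopingAlgebra.ι R c) (UniversalEnvelopingAlgebra.ι R d)) = 0 := by
  apply cybeForm_wedge_add_smul_wedge_eq_zero k t <;>
    simp only [← LieHom.map_lie, hab, hac, had, hcd, hbc, hbd, map_zero, map_neg, map_smul]

end YangBaxter

theorem poincare_r13_cybe_general {L : Type*} [LieRing L] [LieAlgebra ℂ L]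
    (M Pv : Fin 3 → L) (P0 : L)
    (hMP : ∀ i j, ⁅M i, Pv j⁆ = Complex.I • ∑ k, (eps i j k : ℂ) • Pv k)
    (hMP0 : ∀ i, ⁅M i, P0⁆ = 0)
    (hPP : ∀ i j, ⁅Pv i, Pv j⁆ = 0)
    (hP0P : ∀ i, ⁅P0, Pv i⁆ = 0)
    (β₁ α₁ α₂ : ℂ) :
    let h' : L := Complex.I • M 2
    let A := UniversalEnvelopingAlgebra ℂ L
    let ι : L → A := fun z => UniversalEnvelopingAlgebra.ι ℂ z
    let w : L → L → A ⊗[ℂ] A := fun a b => ι a ⊗ₜ[ℂ] ι b - ι b ⊗ₜ[ℂ] ι a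
    let r : A ⊗[ℂ] A := β₁ • w P0 h' + α₁ • w P0 (Pv 2) + α₂ • w (Pv 0) (Pv 1)
    let E12 : (A ⊗[ℂ] A) →ₐ[ℂ] A ⊗[ℂ] (A ⊗[ℂ] A) :=
      Algebra.TensorProduct.map (AlgHom.id ℂ A) Algebra.TensorProduct.includeLeft
    let E13 : (A ⊗[ℂ] A) →ₐ[ℂ] A ⊗[ℂ] (A ⊗[ℂ] A) :=
      Algebra.TensorProduct.map (AlgHom.id ℂ A) Algebra.TensorProduct.includeRight
    let E23 : (A ⊗[ℂ] A) →ₐ[ℂ] A ⊗[ℂ] (A ⊗[ℂ] A) := Algebra.TensorProduct.includeRight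
    (⁅h', P0⁆ = 0 ∧ ⁅h', Pv 2⁆ = 0 ∧
     ⁅M 2, Pv 0⁆ = Complex.I • Pv 1 ∧ ⁅M 2, Pv 1⁆ = -(Complex.I • Pv 0)) ∧
    ⁅E12 r, E13 r⁆ + ⁅E12 r, E23 r⁆ + ⁅E13 r, E23 r⁆ = 0 := by
  intro h' A ι w r E12 E13 E23
  have hM2P0 : ⁅M 2, Pv 0⁆ = Complex.I • Pv 1 := by rw [hMP, Fin.sum_univ_three]; simp [eps]
  have hM2P1 : ⁅M 2, Pv 1⁆ = -(Complex.I • Pv 0) := by rw [hMP, Fin.sum_univ_three]; simp [eps]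
  have hM2P2 : ⁅M 2, Pv 2⁆ = 0 := by rw [hMP, Fin.sum_univ_three]; simp [eps]
  have hh'P0 : ⁅h', P0⁆ = 0 := by simp [h', hMP0]
  refine ⟨⟨hh'P0, by simp [h', hM2P2], hM2P0, hM2P1⟩, ?_⟩
  set b := β₁ • h' + α₁ • Pv 2
  have hr : r = wedge ℂ (ι P0) (ι b) + α₂ • wedge ℂ (ι (Pv 0)) (ι (Pv 1)) := by
    simp only [r, w, ι, wedge, b, map_add, map_smul, TensorProduct.tmul_add,
      TensorProduct.add_tmul, TensorProduct.tmul_smul, ← TensorProduct.smul_tmul']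
    module
  change cybeForm ℂ A r r = 0
  rw [hr]
  apply cybeForm_ι_wedge_add_smul_wedge_eq_zero β₁ α₂
  · simp [b, ← lie_skew P0 h', hh'P0, hP0P]
  · exact hP0P 0
  · exact hP0P 1
  · exact hPP 0 1
  · simp [b, h', hM2P0, hPP, smul_smul, mul_assoc]
  · simp [b, h', hM2P1, hPP, smul_smul, mul_assoc]

/-- in the Poincaré algebra, `h' = iM₃` and `P₀` commute, `[h',P₃] = 0`,
`[M₃,P₁] = iP₂`, `[M₃,P₂] = −iP₁`; hence
`r₁₃ = β₁ P₀ ∧ h' + α₁ P₀ ∧ P₃ + α₂ P₁ ∧ P₂` satisfies the homogeneous CYBE. -/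
theorem poincare_r13_cybe {L : Type*} [LieRing L] [LieAlgebra ℂ L]
    (M N Pv : Fin 3 → L) (P0 : L)
    (hMM : ∀ i j, ⁅M i, M j⁆ = Complex.I • ∑ k, (eps i j k : ℂ) • M k)
    (hMN : ∀ i j, ⁅M i, N j⁆ = Complex.I • ∑ k, (eps i j k : ℂ) • N k)
    (hNN : ∀ i j, ⁅N i, N j⁆ = -(Complex.I • ∑ k, (eps i j k : ℂ) • M k))
    (hMP : ∀ i j, ⁅M i, Pv j⁆ = Complex.I • ∑ k, (eps i j k : ℂ) • Pv k)
    (hMP0 : ∀ i, ⁅M i, P0⁆ = 0)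
    (hNP : ∀ i j, ⁅N i, Pv j⁆ = if i = j then -(Complex.I • P0) else 0)
    (hNP0 : ∀ i, ⁅N i, P0⁆ = -(Complex.I • Pv i))
    (hPP : ∀ i j, ⁅Pv i, Pv j⁆ = 0)
    (hP0P : ∀ i, ⁅P0, Pv i⁆ = 0)
    (β₁ α₁ α₂ : ℂ) :
    let h' : L := Complex.I • M 2
    let A := UniversalEnvelopingAlgebra ℂ L
    let ι : L → A := fun z => UniversalEnvelopingAlgebra.ι ℂ z
    let w : L → L → A ⊗[ℂ] A := fun a b => ι a ⊗ₜ[ℂ] ι b - ι b ⊗ₜ[ℂ] ι a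
    let r : A ⊗[ℂ] A := β₁ • w P0 h' + α₁ • w P0 (Pv 2) + α₂ • w (Pv 0) (Pv 1)
    let E12 : (A ⊗[ℂ] A) →ₐ[ℂ] A ⊗[ℂ] (A ⊗[ℂ] A) :=
      Algebra.TensorProduct.map (AlgHom.id ℂ A) Algebra.TensorProduct.includeLeft
    let E13 : (A ⊗[ℂ] A) →ₐ[ℂ] A ⊗[ℂ] (A ⊗[ℂ] A) :=
      Algebra.TensorProduct.map (AlgHom.id ℂ A) Algebra.TensorProduct.includeRight
    let E23 : (A ⊗[ℂ] A) →ₐ[ℂ] A ⊗[ℂ] (A ⊗[ℂ] A) := Algebra.TensorProduct.includeRight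
    (⁅h', P0⁆ = 0 ∧ ⁅h', Pv 2⁆ = 0 ∧
     ⁅M 2, Pv 0⁆ = Complex.I • Pv 1 ∧ ⁅M 2, Pv 1⁆ = -(Complex.I • Pv 0)) ∧
    ⁅E12 r, E13 r⁆ + ⁅E12 r, E23 r⁆ + ⁅E13 r, E23 r⁆ = 0 :=
  poincare_r13_cybe_general M Pv P0 hMP hMP0 hPP hP0P β₁ α₁ α₂
end
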